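/- arXiv:0903.1373 — 2 statements merged into one kernel-verified Lean document; each statement's English description precedes it below -/
import Mathlib

section
/- Let 0 ≤ k ≤ n, let α : Fin k → Fin n be injective, and let γ : Fin k → Fin n be arbitrary. Then the sum, over all injective β : Fin (n-k) → Fin n whose range is the complement of the range of α, of sign⟨α,⃖β⟩ · w(β,γ) equals (-1)^⌊n/2⌋ · (n-k)! · v(α,γ). Here w(β,γ) := sign⟨β,⃖γ⟩ if γ is injective with range equal to the complement of the range of β, and 0 otherwise; and v(α,γ) := sign τ if γ = α ∘ τ for the (necessarily unique) permutation τ of Fin k, and 0 if γ is not a rearrangement of α. -/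
attribute [local instance] Classical.propDecidable

/-- The permutation of `Fin n` that lists the values of `α : Fin a → Fin n` in order,
followed by the values of `β : Fin b → Fin n` in reverse order. -/
noncomputable def listPerm {n a b : ℕ} (hab : a + b = n) (α : Fin a → Fin n) (β : Fin b → Fin n)
    (hα : Function.Injective α) (hβ : Function.Injective β)
    (hd : ∀ s t, α s ≠ β t) : Equiv.Perm (Fin n) :=
  Equiv.ofBijective
    ((Sum.elim α (β ∘ Fin.rev)) ∘ (finSumFinEquiv.symm ∘ Fin.cast hab.symm))
    (by
      have hinj : Function.Injective (Sum.elim α (β ∘ Fin.rev)) :=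
        Function.Injective.sumElim hα (hβ.comp Fin.rev_injective)
          (fun s t => hd s (Fin.rev t))
      exact Finite.injective_iff_bijective.mp
        (hinj.comp (finSumFinEquiv.symm.injective.comp (Fin.cast_injective _))))

/-- The unique strictly monotone map `Fin (n-k) → Fin n` whose range is the complement of
the range of an injective map `J : Fin k → Fin n`. -/
noncomputable def monoCompl {n k : ℕ} (J : Fin k → Fin n) (hJ : Function.Injective J) :
    Fin (n - k) → Fin n :=
  (Finset.univ.image J)ᶜ.orderEmbOfFin (by
    rw [Finset.card_compl, Finset.card_image_of_injective _ hJ, Finset.card_univ,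
      Fintype.card_fin, Fintype.card_fin])

theorem monoCompl_injective {n k : ℕ} (J : Fin k → Fin n) (hJ : Function.Injective J) :
    Function.Injective (monoCompl J hJ) :=
  ((Finset.univ.image J)ᶜ.orderEmbOfFin _).injective

theorem monoCompl_ne {n k : ℕ} (J : Fin k → Fin n) (hJ : Function.Injective J) :
    ∀ s t, monoCompl J hJ s ≠ J t := by
  intro s t h
  have hmem : monoCompl J hJ s ∈ (Finset.univ.image J)ᶜ := Finset.orderEmbOfFin_mem _ _ _
  rw [Finset.mem_compl] at hmem
  exact hmem (h ▸ Finset.mem_image_of_mem J (Finset.mem_univ t))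

/-- `w(β,γ)`: the sign of the permutation `⟨β,⃖γ⟩` if `γ` is injective with range equal to
the complement of the range of `β`, and `0` otherwise. -/
noncomputable def wCoef {n k : ℕ} (hk : k ≤ n) (β : Fin (n - k) → Fin n)
    (hβ : Function.Injective β) (γ : Fin k → Fin n) : ℤ :=
  if h : Function.Injective γ ∧ Set.range γ = (Set.range β)ᶜ then
    (Equiv.Perm.sign (listPerm (Nat.sub_add_cancel hk) β γ hβ h.1
      (fun s t hst => (h.2 ▸ Set.mem_range_self t : γ t ∈ (Set.range β)ᶜ) ⟨s, hst⟩)) : ℤ)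
  else 0

/-- `v(α,γ)`: the sign of the (necessarily unique) permutation `τ` with `γ = α ∘ τ`,
and `0` if `γ` is not a rearrangement of `α`. -/
noncomputable def vCoef {n k : ℕ} (α γ : Fin k → Fin n) : ℤ :=
  if h : ∃ τ : Equiv.Perm (Fin k), γ = α ∘ τ then (Equiv.Perm.sign h.choose : ℤ) else 0

/-!
If `γ = α ∘ τ`, then `⟨β,⃖γ⟩` is `⟨β,⃖α⟩` followed by a permutation of sign `sign τ`, and
`⟨β,⃖α⟩` is `⟨α,⃖β⟩` followed by the reversal of `Fin n`, whose sign is `(-1)^⌊n/2⌋`. So every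
admissible `β` contributes `(-1)^⌊n/2⌋ sign τ`, and the admissible `β` are the `(n-k)!`
rearrangements of any one of them. If `γ` is not a rearrangement of `α`, every term vanishes.
-/

open Equiv Finset

theorem Int.units_neg_one_pow_succ_div_two (n : ℕ) :
    ((-1 : ℤˣ) ^ ((n + 1) / 2)) = (-1) ^ n * (-1) ^ (n / 2) := by
  rw [← pow_add, Int.units_pow_eq_pow_mod_two, Int.units_pow_eq_pow_mod_two (-1) (n + _)]
  congr 1
  rcases Nat.even_or_odd' n with ⟨m, rfl | rfl⟩ <;> omega

theorem finRotate_mul_revPerm (n : ℕ) :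
    finRotate (n + 1) * Fin.revPerm = Perm.decomposeFin.symm (0, Fin.revPerm) := by
  ext x
  induction x using Fin.cases with
  | zero => simp [Perm.decomposeFin_symm_apply_zero]
  | succ m =>
    simp [Perm.decomposeFin_symm_apply_succ, Fin.rev_succ, finRotate_apply]

theorem Fin.sign_revPerm : ∀ n : ℕ,
    Perm.sign (Fin.revPerm : Perm (Fin n)) = (-1) ^ (n / 2)
  | 0 => rfl
  | n + 1 => by
    have h := congrArg Perm.sign (finRotate_mul_revPerm n)
    rw [map_mul, sign_finRotate, Perm.decomposeFin.symm_sign, if_pos rfl, one_mul,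
      Fin.sign_revPerm n, Nat.add_one_sub_one] at h
    rw [Int.units_neg_one_pow_succ_div_two, ← h, ← mul_assoc, ← pow_add, ← two_mul, pow_mul]
    simp

section listPerm

variable {n a b : ℕ} {α : Fin a → Fin n} {β : Fin b → Fin n}
  (hα : Function.Injective α) (hβ : Function.Injective β)

@[simp]
theorem listPerm_apply_castAdd (hab : a + b = n) (hd : ∀ s t, α s ≠ β t) (s : Fin a) :
    listPerm hab α β hα hβ hd (Fin.cast hab (Fin.castAdd b s)) = α s := by
  simp [listPerm]

@[simp]
theorem listPerm_apply_natAdd (hab : a + b = n) (hd : ∀ s t, α s ≠ β t) (t : Fin b) :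
    listPerm hab α β hα hβ hd (Fin.cast hab (Fin.natAdd a t)) = β t.rev := by
  simp [listPerm]

theorem listPerm_swap (hab : a + b = n) (hba : b + a = n) (hd : ∀ s t, α s ≠ β t)
    (hd' : ∀ t s, β t ≠ α s) :
    listPerm hba β α hβ hα hd' = listPerm hab α β hα hβ hd * Fin.revPerm := by
  refine Equiv.ext fun x => ?_
  obtain ⟨y, rfl⟩ := (finSumFinEquiv.trans (finCongr hba)).surjective x
  rcases y with t | s
  · have hrev : (Fin.cast hba (Fin.castAdd a t)).rev = Fin.cast hab (Fin.natAdd a t.rev) := by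
      ext; simp; omega
    simp [hrev]
  · have hrev : (Fin.cast hba (Fin.natAdd b s)).rev = Fin.cast hab (Fin.castAdd b s.rev) := by
      ext; simp; omega
    simp [hrev]

theorem listPerm_comp_perm (hab : a + b = n) (hd : ∀ s t, α s ≠ β t) (σ : Perm (Fin b))
    (hd' : ∀ s t, α s ≠ (β ∘ σ) t) :
    listPerm hab α (β ∘ σ) hα (hβ.comp σ.injective) hd' = listPerm hab α β hα hβ hd *
      (finSumFinEquiv.trans (finCongr hab)).permCongr
        (sumCongr 1 (Fin.revPerm * σ * Fin.revPerm)) := by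
  refine Equiv.ext fun x => ?_
  obtain ⟨y, rfl⟩ := (finSumFinEquiv.trans (finCongr hab)).surjective x
  rcases y with s | t <;> simp [permCongr_apply]

theorem sign_listPerm_comp_perm (hab : a + b = n) (hd : ∀ s t, α s ≠ β t)
    (σ : Perm (Fin b)) (hd' : ∀ s t, α s ≠ (β ∘ σ) t) :
    Perm.sign (listPerm hab α (β ∘ σ) hα (hβ.comp σ.injective) hd') =
      Perm.sign (listPerm hab α β hα hβ hd) * Perm.sign σ := by
  rw [listPerm_comp_perm hα hβ hab hd, map_mul, Perm.sign_permCongr,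
    Perm.sign_sumCongr, map_one, one_mul, map_mul, map_mul, mul_right_comm,
    Int.units_mul_self, one_mul]

end listPerm

theorem exists_perm_eq_comp_of_range_subset {ι X : Type*} [Finite ι] {f g : ι → X}
    (hg : Function.Injective g) (h : Set.range g ⊆ Set.range f) :
    ∃ σ : Perm ι, g = f ∘ σ := by
  choose c hc using fun i => h (Set.mem_range_self i)
  have hc_inj : Function.Injective c := fun i j hij => hg (by rw [← hc, ← hc, hij])
  exact ⟨ofBijective c (Finite.injective_iff_bijective.mp hc_inj),
    funext fun i => (hc i).symm⟩

theorem card_filter_injective_range_eq {ι X : Type*} [Fintype ι] [DecidableEq ι]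
    [Fintype X] [DecidableEq X] {f : ι → X} (hf : Function.Injective f) :
    #{g : ι → X | Function.Injective g ∧ Set.range g = Set.range f} =
      (Fintype.card ι).factorial := by
  rw [← Fintype.card_perm, ← card_univ]
  refine (card_bij (fun (σ : Perm ι) _ => f ∘ σ) ?_ ?_ ?_).symm
  · intro σ _
    exact mem_filter.mpr ⟨mem_univ _, hf.comp σ.injective, σ.surjective.range_comp f⟩
  · intro σ _ τ _ h
    exact Equiv.ext fun i => hf (congrFun h i)
  · intro g hg
    obtain ⟨hg_inj, hg_range⟩ := (mem_filter.mp hg).2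
    obtain ⟨σ, rfl⟩ := exists_perm_eq_comp_of_range_subset hg_inj hg_range.subset
    exact ⟨σ, mem_univ _, rfl⟩

theorem range_monoCompl {n k : ℕ} (α : Fin k → Fin n) (hα : Function.Injective α) :
    Set.range (monoCompl α hα) = (Set.range α)ᶜ := by
  simp [monoCompl, Finset.range_orderEmbOfFin]

theorem card_filter_injective_range_eq_compl {n k : ℕ} (α : Fin k → Fin n)
    (hα : Function.Injective α) :
    #{β : Fin (n - k) → Fin n | Function.Injective β ∧ Set.range β = (Set.range α)ᶜ} =
      (n - k).factorial := by
  simpa [range_monoCompl] using card_filter_injective_range_eq (monoCompl_injective α hα)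

theorem vCoef_comp_perm {n k : ℕ} {α : Fin k → Fin n} (hα : Function.Injective α)
    (τ : Perm (Fin k)) : vCoef α (α ∘ τ) = Perm.sign τ := by
  have hex : ∃ σ : Perm (Fin k), α ∘ τ = α ∘ σ := ⟨τ, rfl⟩
  have hchoose : hex.choose = τ :=
    Equiv.ext fun i => hα (congrFun hex.choose_spec i).symm
  rw [vCoef, dif_pos hex, hchoose]

theorem sign_listPerm_mul_wCoef {n k : ℕ} (hk : k ≤ n) {α : Fin k → Fin n}
    (hα : Function.Injective α) {β : Fin (n - k) → Fin n} (hβ : Function.Injective β)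
    (hβα : Set.range β = (Set.range α)ᶜ) (hd : ∀ s t, α s ≠ β t) (γ : Fin k → Fin n) :
    (Perm.sign (listPerm (Nat.add_sub_cancel' hk) α β hα hβ hd) : ℤ) * wCoef hk β hβ γ =
      (-1) ^ (n / 2) * vCoef α γ := by
  by_cases hγ : ∃ τ : Perm (Fin k), γ = α ∘ τ
  · obtain ⟨τ, rfl⟩ := hγ
    have hrange : Set.range (α ∘ τ) = (Set.range β)ᶜ := by
      rw [τ.surjective.range_comp, hβα, compl_compl]
    rw [wCoef, dif_pos ⟨hα.comp τ.injective, hrange⟩, vCoef_comp_perm hα, ← Units.val_mul,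
      sign_listPerm_comp_perm hβ hα _ (fun t s => (hd s t).symm),
      listPerm_swap hα hβ (Nat.add_sub_cancel' hk) _ hd, map_mul, Fin.sign_revPerm, ← mul_assoc,
      ← mul_assoc, Int.units_mul_self, one_mul]
    simp
  · have hw : ¬(Function.Injective γ ∧ Set.range γ = (Set.range β)ᶜ) := by
      rintro ⟨hγ_inj, hγ_range⟩
      exact hγ (exists_perm_eq_comp_of_range_subset hγ_inj (by rw [hγ_range, hβα, compl_compl]))
    rw [wCoef, dif_neg hw, vCoef, dif_neg hγ, mul_zero, mul_zero]

theorem sum_sign_listPerm_mul_wCoef {n k : ℕ} (hk : k ≤ n)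
    (α : Fin k → Fin n) (hα : Function.Injective α) (γ : Fin k → Fin n) :
    (∑ β : Fin (n - k) → Fin n,
      if h : Function.Injective β ∧ Set.range β = (Set.range α)ᶜ then
        (Equiv.Perm.sign (listPerm (Nat.add_sub_cancel' hk) α β hα h.1
          (fun s t hst => (h.2 ▸ Set.mem_range_self t : β t ∈ (Set.range α)ᶜ) ⟨s, hst⟩)) : ℤ)
          * wCoef hk β h.1 γ
      else 0) =
    (-1) ^ (n / 2) * (Nat.factorial (n - k) : ℤ) * vCoef α γ := by
  calc _ = ∑ β : Fin (n - k) → Fin n,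
        if Function.Injective β ∧ Set.range β = (Set.range α)ᶜ then
          (-1) ^ (n / 2) * vCoef α γ else 0 := by
        refine Fintype.sum_congr _ _ fun β => ?_
        split_ifs with h
        · exact sign_listPerm_mul_wCoef hk hα h.1 h.2 _ γ
        · rfl
    _ = _ := by
        rw [sum_ite, sum_const_zero, add_zero, sum_const,
          card_filter_injective_range_eq_compl α hα, nsmul_eq_mul]
        ring
end

section
/- Laplace expansion: let F be a commutative ring, A an n×n matrix over F, 0 ≤ k ≤ n, and I : Fin k → Fin n strictly monotone. Then det A = ∑ over all strictly monotone J : Fin k → Fin n (equivalently, over all k-element subsets of Fin n via their monotone enumeration) of C_{I,J} · det (A.submatrix I J); and likewise det A = ∑ over all strictly monotone J : Fin k → Fin n of C_{J,I} · det (A.submatrix J I). -/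
attribute [local instance] Classical.propDecidable

/-- The generalized cofactor `C_{I,J}`: the signed determinant of the complementary
submatrix obtained by deleting the rows in `I` and the columns in `J`. -/
noncomputable def cofactor {F : Type*} [CommRing F] {n k : ℕ} (A : Matrix (Fin n) (Fin n) F)
    (I J : Fin k → Fin n) (hI : StrictMono I) (hJ : StrictMono J) : F :=
  (-1 : F) ^ (∑ t, ((I t : ℕ) + 1) + ∑ t, ((J t : ℕ) + 1)) *
    (A.submatrix (monoCompl I hI.injective) (monoCompl J hJ.injective)).det


/-!
Write `e_J : Fin k ⊕ Fin (n - k) ≃ Fin n` for the bijection `J ⊔ Jᶜ`. Every permutation `σ` of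
`Fin n` is uniquely `e_I ∘ (α ⊕ β) ∘ e_J⁻¹`: `J` enumerates `σ⁻¹ (range I)`, and `α`, `β` are
the induced permutations of the two blocks. Grouping the terms of the Leibniz formula by `J`
gives `∑_J ε_I ε_J det A[I, J] det A[Iᶜ, Jᶜ]`, where `ε_J` is the sign of the shuffle
`e_J ∘ e₀⁻¹` and `e₀` belongs to `J = (0, …, k-1)`. The inversions of this shuffle are the pairs
with `Jᶜ s < J t`; there are `∑ t, (J t - t)` of them, so `ε_I ε_J` is the sign
`(-1) ^ (∑ t, (I t + 1) + ∑ t, (J t + 1))` of the cofactor. The column expansion is the row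
expansion of `Aᵀ`.
-/

open Equiv Equiv.Perm Finset
open scoped Matrix

theorem Equiv.Perm.sign_eq_neg_one_pow_card_inversions {n : ℕ} (σ : Perm (Fin n)) :
    sign σ = (-1) ^ #{p : Fin n × Fin n | p.1 < p.2 ∧ σ p.2 < σ p.1} := by
  rw [sign_eq_prod_prod_Ioi, ← prod_const, prod_filter, Fintype.prod_prod_type]
  refine prod_congr rfl fun i _ => ?_
  rw [← filter_lt_eq_Ioi, prod_filter]
  refine prod_congr rfl fun j _ => ?_
  split_ifs <;> grind [σ.injective.eq_iff]

theorem Fintype.sum_dite_eq_sum_subtype {ι M : Type*} [Fintype ι] [AddCommMonoid M]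
    (p : ι → Prop) [DecidablePred p] (f : ∀ i, p i → M) :
    ∑ i, (if h : p i then f i h else 0) = ∑ i : Subtype p, f i i.2 :=
  (Fintype.sum_of_injective Subtype.val Subtype.val_injective (fun i => f i i.2)
    (fun i => if h : p i then f i h else 0) (fun i hi => dif_neg fun h => hi ⟨⟨i, h⟩, rfl⟩)
    fun i => (dif_pos i.2).symm).symm

section MonoCompl

variable {n k : ℕ} {J : Fin k → Fin n}

theorem monoCompl_strictMono (hJ : Function.Injective J) : StrictMono (monoCompl J hJ) :=
  (orderEmbOfFin _ _).strictMono

theorem range_monoCompl_s7 (hJ : Function.Injective J) :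
    Set.range (monoCompl J hJ) = (Set.range J)ᶜ := by
  rw [monoCompl, range_orderEmbOfFin]
  simp

theorem monoCompl_notMem_range (hJ : Function.Injective J) (s : Fin (n - k)) :
    monoCompl J hJ s ∉ Set.range J :=
  show monoCompl J hJ s ∈ (Set.range J)ᶜ from range_monoCompl_s7 hJ ▸ Set.mem_range_self s

noncomputable def sumMonoComplEquiv (hJ : Function.Injective J) : Fin k ⊕ Fin (n - k) ≃ Fin n :=
  Equiv.ofBijective (Sum.elim J (monoCompl J hJ))
    ⟨hJ.sumElim (monoCompl_strictMono hJ).injective fun t s h =>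
        monoCompl_notMem_range hJ s ⟨t, h⟩, by
      rw [← Set.range_eq_univ, Set.Sum.elim_range, range_monoCompl_s7, Set.union_compl_self]⟩

@[simp]
theorem sumMonoComplEquiv_inl (hJ : Function.Injective J) (t : Fin k) :
    sumMonoComplEquiv hJ (.inl t) = J t := rfl

@[simp]
theorem sumMonoComplEquiv_inr (hJ : Function.Injective J) (s : Fin (n - k)) :
    sumMonoComplEquiv hJ (.inr s) = monoCompl J hJ s := rfl

/-- The `J t` elements below `J t` are the `t` values `J t'` with `t' < t`, and values of
`monoCompl J`. -/
theorem card_monoCompl_lt_add (hJ : StrictMono J) (t : Fin k) :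
    #{s | monoCompl J hJ.injective s < J t} + t = J t := by
  calc #{s | monoCompl J hJ.injective s < J t} + t
      = #{t' | J t' < J t} + #{s | monoCompl J hJ.injective s < J t} := by
        simp only [hJ.lt_iff_lt, filter_gt_eq_Iio, Fin.card_Iio, add_comm]
    _ = #{x | x < J t} := by
        simp only [card_filter]
        rw [← (sumMonoComplEquiv hJ.injective).sum_comp, Fintype.sum_sum_type]
        rfl
    _ = J t := by rw [filter_gt_eq_Iio, Fin.card_Iio]

end MonoCompl

section Shuffle

variable {n k : ℕ} (hk : k ≤ n) {J : Fin k → Fin n}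

/-- The permutation of `Fin n` sending `0, …, k-1` to `J 0 < … < J (k-1)` and `k, …, n-1` to the
increasing enumeration of the complement of the range of `J`. -/
noncomputable def shuffle (J : Fin k → Fin n) (hJ : StrictMono J) : Perm (Fin n) :=
  (sumMonoComplEquiv (Fin.strictMono_castLE hk).injective).symm.trans
    (sumMonoComplEquiv hJ.injective)

theorem castLE_lt_monoCompl_castLE (t : Fin k) (s : Fin (n - k)) :
    Fin.castLE hk t < monoCompl (Fin.castLE hk) (Fin.strictMono_castLE hk).injective s := by
  by_contra! h
  exact monoCompl_notMem_range (Fin.strictMono_castLE hk).injective s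
    ⟨⟨_, lt_of_le_of_lt (Fin.le_def.mp h) t.isLt⟩, rfl⟩

@[simp]
theorem shuffle_castLE (hJ : StrictMono J) (t : Fin k) :
    shuffle hk J hJ (Fin.castLE hk t) = J t :=
  congrArg (sumMonoComplEquiv hJ.injective) (Equiv.symm_apply_apply _ (.inl t))

@[simp]
theorem shuffle_monoCompl_castLE (hJ : StrictMono J) (s : Fin (n - k)) :
    shuffle hk J hJ (monoCompl _ (Fin.strictMono_castLE hk).injective s) =
      monoCompl J hJ.injective s :=
  congrArg (sumMonoComplEquiv hJ.injective) (Equiv.symm_apply_apply _ (.inr s))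

theorem card_inversions_shuffle (hJ : StrictMono J) :
    #{p : Fin n × Fin n | p.1 < p.2 ∧ shuffle hk J hJ p.2 < shuffle hk J hJ p.1} =
      ∑ t, #{s | monoCompl J hJ.injective s < J t} := by
  let e₀ := sumMonoComplEquiv (Fin.strictMono_castLE hk).injective
  rw [card_filter, ← (e₀.prodCongr e₀).sum_comp]
  simp only [Equiv.prodCongr_apply, Prod.map, Fintype.sum_prod_type, Fintype.sum_sum_type]
  have not_lt_and_gt {m : ℕ} (a b : Fin m) : ¬(a < b ∧ b < a) := fun h => lt_asymm h.1 h.2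
  simp [e₀, hJ.lt_iff_lt, (monoCompl_strictMono _).lt_iff_lt, not_lt_and_gt,
    castLE_lt_monoCompl_castLE, (castLE_lt_monoCompl_castLE hk _ _).not_gt]

theorem sign_shuffle (hJ : StrictMono J) :
    sign (shuffle hk J hJ) = (-1) ^ (∑ t, (J t : ℕ) + ∑ t : Fin k, (t : ℕ)) := by
  have hcount : ∑ t, #{s | monoCompl J hJ.injective s < J t} + ∑ t : Fin k, (t : ℕ) =
      ∑ t, (J t : ℕ) := by
    rw [← sum_add_distrib]
    exact sum_congr rfl fun t _ => card_monoCompl_lt_add hJ t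
  rw [sign_eq_neg_one_pow_card_inversions, card_inversions_shuffle, ← hcount, add_assoc,
    ← two_mul, pow_add, (even_two_mul _).neg_one_pow, mul_one]

theorem cast_sign_shuffle_mul_sign_shuffle {R : Type*} [CommRing R] {I : Fin k → Fin n}
    (hI : StrictMono I) (hJ : StrictMono J) :
    (((sign (shuffle hk I hI) * sign (shuffle hk J hJ) : ℤˣ) : ℤ) : R) =
      (-1) ^ (∑ t, ((I t : ℕ) + 1) + ∑ t, ((J t : ℕ) + 1)) := by
  rw [sign_shuffle, sign_shuffle, ← pow_add]
  push_cast
  rw [neg_one_pow_eq_pow_mod_two, neg_one_pow_eq_pow_mod_two (∑ t, ((I t : ℕ) + 1) + _)]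
  congr 1
  simp only [sum_add_distrib]
  omega

end Shuffle

section BlockPerm

variable {n k : ℕ} {I : Fin k → Fin n} (hI : Function.Injective I)

noncomputable def blockPerm :
    {J : Fin k → Fin n // StrictMono J} × Perm (Fin k) × Perm (Fin (n - k)) → Perm (Fin n) :=
  fun ⟨J, α, β⟩ => ((sumMonoComplEquiv J.2.injective).symm.trans (α.sumCongr β)).trans
    (sumMonoComplEquiv hI)

section

variable (J : {J : Fin k → Fin n // StrictMono J}) (α : Perm (Fin k)) (β : Perm (Fin (n - k)))

theorem blockPerm_sumMonoComplEquiv (x : Fin k ⊕ Fin (n - k)) :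
    blockPerm hI (J, α, β) (sumMonoComplEquiv J.2.injective x) =
      sumMonoComplEquiv hI (α.sumCongr β x) := by
  simp [blockPerm]

@[simp]
theorem blockPerm_apply (t : Fin k) : blockPerm hI (J, α, β) (J.1 t) = I (α t) :=
  blockPerm_sumMonoComplEquiv hI J α β (.inl t)

@[simp]
theorem blockPerm_monoCompl (s : Fin (n - k)) :
    blockPerm hI (J, α, β) (monoCompl J.1 J.2.injective s) = monoCompl I hI (β s) :=
  blockPerm_sumMonoComplEquiv hI J α β (.inr s)

theorem blockPerm_mem_range_iff (x : Fin n) :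
    blockPerm hI (J, α, β) x ∈ Set.range I ↔ x ∈ Set.range J.1 := by
  obtain ⟨t | s, rfl⟩ := (sumMonoComplEquiv J.2.injective).surjective x
  · rw [sumMonoComplEquiv_inl, blockPerm_apply]
    exact iff_of_true (Set.mem_range_self _) (Set.mem_range_self _)
  · rw [sumMonoComplEquiv_inr, blockPerm_monoCompl]
    exact iff_of_false (monoCompl_notMem_range _ _) (monoCompl_notMem_range _ _)

theorem prod_blockPerm_apply {M : Type*} [CommMonoid M] (f : Fin n → Fin n → M) :
    ∏ i, f (blockPerm hI (J, α, β) i) i =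
      (∏ t, f (I (α t)) (J.1 t)) *
        ∏ s, f (monoCompl I hI (β s)) (monoCompl J.1 J.2.injective s) := by
  rw [← (sumMonoComplEquiv J.2.injective).prod_comp, Fintype.prod_sum_type]
  simp

end

theorem blockPerm_injective : Function.Injective (blockPerm hI) := by
  rintro ⟨J, α, β⟩ ⟨J', α', β'⟩ h
  have hJ : J = J' := by
    refine Subtype.ext ((J.2.range_inj J'.2).mp (Set.ext fun x => ?_))
    rw [← blockPerm_mem_range_iff hI J α β, h, blockPerm_mem_range_iff]
  subst hJ
  have hαβ : α.sumCongr β = α'.sumCongr β' := by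
    ext x
    simpa [blockPerm_sumMonoComplEquiv] using
      congr($h (sumMonoComplEquiv J.2.injective x))
  obtain ⟨rfl, rfl⟩ := Prod.ext_iff.mp (sumCongrHom_injective (a₁ := (α, β)) (a₂ := (α', β')) hαβ)
  rfl

theorem blockPerm_surjective : Function.Surjective (blockPerm hI) := by
  intro σ
  have hS : #((univ.image I).image σ.symm) = k := by
    rw [card_image_of_injective _ σ.symm.injective, card_image_of_injective _ hI, card_fin]
  let J := ((univ.image I).image σ.symm).orderEmbOfFin hS
  let eJ := sumMonoComplEquiv J.strictMono.injective
  let eI := sumMonoComplEquiv hI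
  have hmaps : Set.MapsTo ((eJ.trans σ).trans eI.symm) (Set.range .inl) (Set.range .inl) := by
    rintro _ ⟨t, rfl⟩
    have hJt : J t ∈ (univ.image I).image σ.symm := orderEmbOfFin_mem _ hS t
    simp only [mem_image, mem_univ, true_and] at hJt
    obtain ⟨_, ⟨t', rfl⟩, ht'⟩ := hJt
    refine ⟨t', eI.injective ?_⟩
    simp [eJ, eI, ← ht']
  obtain ⟨⟨α, β⟩, hαβ⟩ := mem_sumCongrHom_range_of_perm_mapsTo_inl hmaps
  rw [sumCongrHom_apply] at hαβ
  refine ⟨(⟨J, J.strictMono⟩, α, β), Equiv.ext fun x => ?_⟩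
  obtain ⟨a, rfl⟩ := eJ.surjective x
  rw [blockPerm_sumMonoComplEquiv]
  simp [hαβ, eJ, eI]

theorem blockPerm_bijective : Function.Bijective (blockPerm hI) :=
  ⟨blockPerm_injective hI, blockPerm_surjective hI⟩

end BlockPerm

theorem sign_blockPerm {n k : ℕ} (hk : k ≤ n) {I : Fin k → Fin n} (hI : StrictMono I)
    (J : {J : Fin k → Fin n // StrictMono J}) (α : Perm (Fin k)) (β : Perm (Fin (n - k))) :
    sign (blockPerm hI.injective (J, α, β)) =
      sign (shuffle hk I hI) * sign (shuffle hk J.1 J.2) * (sign α * sign β) := by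
  have hdecomp : blockPerm hI.injective (J, α, β) = shuffle hk I hI *
      (sumMonoComplEquiv (Fin.strictMono_castLE hk).injective).permCongr (α.sumCongr β) *
        (shuffle hk J.1 J.2)⁻¹ := by
    ext x
    simp [blockPerm, shuffle, Equiv.permCongr_apply, Perm.inv_def]
  rw [hdecomp, Perm.sign_mul, Perm.sign_mul, sign_inv, sign_permCongr, sign_sumCongr, mul_right_comm]

section Laplace

variable {R : Type*} [CommRing R] {n k : ℕ} (A : Matrix (Fin n) (Fin n) R)
  {I : Fin k → Fin n} (hI : StrictMono I)

theorem det_eq_sum_cofactor_mul_det_row (hk : k ≤ n) :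
    A.det = ∑ J : {J : Fin k → Fin n // StrictMono J},
      cofactor A I J hI J.2 * (A.submatrix I J).det := by
  rw [Matrix.det_apply', ← (blockPerm_bijective hI.injective).sum_comp, Fintype.sum_prod_type]
  refine sum_congr rfl fun J _ => ?_
  rw [cofactor, ← cast_sign_shuffle_mul_sign_shuffle hk hI J.2, Matrix.det_apply',
    Matrix.det_apply', mul_right_comm, mul_assoc, sum_mul_sum, mul_sum, Fintype.sum_prod_type]
  refine sum_congr rfl fun α _ => ?_
  rw [mul_sum]
  refine sum_congr rfl fun β _ => ?_
  rw [sign_blockPerm hk hI, prod_blockPerm_apply hI.injective J α β A]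
  simp only [Matrix.submatrix_apply, Units.val_mul, Int.cast_mul]
  ring

theorem cofactor_transpose {J : Fin k → Fin n} (hJ : StrictMono J) :
    cofactor Aᵀ I J hI hJ = cofactor A J I hJ hI := by
  rw [cofactor, cofactor, add_comm, ← Matrix.transpose_submatrix, Matrix.det_transpose]

theorem det_eq_sum_cofactor_mul_det_column (hk : k ≤ n) :
    A.det = ∑ J : {J : Fin k → Fin n // StrictMono J},
      cofactor A J I J.2 hI * (A.submatrix J I).det := by
  rw [← Matrix.det_transpose, det_eq_sum_cofactor_mul_det_row Aᵀ hI hk]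
  simp only [cofactor_transpose, ← Matrix.transpose_submatrix, Matrix.det_transpose]

end Laplace

theorem laplace_expansion {F : Type*} [CommRing F] {n k : ℕ} (hk : k ≤ n)
    (A : Matrix (Fin n) (Fin n) F) (I : Fin k → Fin n) (hI : StrictMono I) :
    (A.det = ∑ J : Fin k → Fin n,
      if hJ : StrictMono J then cofactor A I J hI hJ * (A.submatrix I J).det else 0) ∧
    (A.det = ∑ J : Fin k → Fin n,
      if hJ : StrictMono J then cofactor A J I hJ hI * (A.submatrix J I).det else 0) := by
  simp only [Fintype.sum_dite_eq_sum_subtype]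
  exact ⟨det_eq_sum_cofactor_mul_det_row A hI hk, det_eq_sum_cofactor_mul_det_column A hI hk⟩
end
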